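/- arXiv:0807.4285 — 2 statements merged into one kernel-verified Lean document; each statement's English description precedes it below -/
import Mathlib

section
/- Assume K is terminating, i.e. K(∞) := 1 − Σ_{n≥1} K(n) > 0. Then the renewal mass function satisfies u_n ~ K(n)/K(∞)² as n → ∞, i.e. lim_{n→∞} u_n · K(∞)² / K(n) = 1. -/
open MeasureTheory ProbabilityTheory Filter Topology

/-- Constrained partition function with site-dependent log-weights `f`:
`Z_N = Σ_{k, 0=t₀<⋯<t_k=N} Π_i K(tᵢ-tᵢ₋₁) exp(f tᵢ)`, written as a sum
over compositions of `N` (for `N = 0` this equals `1`). -/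
noncomputable def Zc (K : ℕ → ℝ) (f : ℕ → ℝ) (N : ℕ) : ℝ :=
  ∑ c : Composition N,
    ∏ i : Fin c.length, K (c.blocksFun i) * Real.exp (f (c.sizeUpTo (i + 1)))

/-- Constrained homogeneous partition function `Z^c_{N,h}`. -/
noncomputable def ZcHom (K : ℕ → ℝ) (h : ℝ) (N : ℕ) : ℝ :=
  Zc K (fun _ => h) N

/-- Constrained disordered partition function `Z^c_{N,ω}` at parameters `(β, h)`. -/
noncomputable def ZcQ (K : ℕ → ℝ) (β h : ℝ) (ω : ℕ → ℝ) (N : ℕ) : ℝ :=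
  Zc K (fun n => β * ω n + h) N

/-- Homogeneous free energy `F(0,h) = sup_{N ≥ 1} (1/N) log Z^c_{N,h}`. -/
noncomputable def F0 (K : ℕ → ℝ) (h : ℝ) : ℝ :=
  ⨆ N : ℕ, Real.log (ZcHom K h (N + 1)) / (N + 1)

/-- Quenched free energy `F(β,h) = sup_{N ≥ 1} (1/N) 𝔼[log Z^c_{N,ω}]`. -/
noncomputable def Fq (K : ℕ → ℝ) (P : Measure (ℕ → ℝ)) (β h : ℝ) : ℝ :=
  ⨆ N : ℕ, (∫ ω, Real.log (ZcQ K β h ω (N + 1)) ∂P) / (N + 1)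

/-- Homogeneous critical point `h_c(0) = -log Σ_{n≥1} K(n)`. -/
noncomputable def hc0 (K : ℕ → ℝ) : ℝ :=
  - Real.log (∑' n : ℕ, K (n + 1))

/-- Quenched critical point `h_c(β) = inf {h | F(β,h) > 0}`. -/
noncomputable def hcQ (K : ℕ → ℝ) (P : Measure (ℕ → ℝ)) (β : ℝ) : ℝ :=
  sInf {h : ℝ | 0 < Fq K P β h}

/-- The renewal mass function: `u 0 = 1`, `u n = Σ_{m=1}^n K(m) u_{n-m}`. -/
noncomputable def renewalMass (K : ℕ → ℝ) : ℕ → ℝ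
  | 0 => 1
  | n + 1 => ∑ m ∈ Finset.range (n + 1), K (m + 1) * renewalMass K (n - m)

/-- `\bar K(m) = 1 - Σ_{n=1}^m K(n)`. -/
noncomputable def Kbar (K : ℕ → ℝ) (m : ℕ) : ℝ :=
  1 - ∑ n ∈ Finset.Icc 1 m, K n

/-- Free homogeneous partition function `Z^f_{N,h} = Σ_{n=0}^N Z^c_{n,h} \bar K(N-n)`. -/
noncomputable def ZfHom (K : ℕ → ℝ) (h : ℝ) (N : ℕ) : ℝ :=
  ∑ n ∈ Finset.range (N + 1), ZcHom K h n * Kbar K (N - n)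

/-- `P` is the law of an IID sequence of standard Gaussian random variables. -/
def IsStdGaussianIID (P : Measure (ℕ → ℝ)) : Prop :=
  IsProbabilityMeasure P ∧
    iIndepFun (fun n (ω : ℕ → ℝ) => ω n) P ∧
    ∀ n : ℕ, P.map (fun ω => ω n) = gaussianReal 0 1

/-!
A power-law kernel is long-tailed with dominated variation: `K (n - j) ~ K n` for fixed `j`, and
`K (n - m) = O(K n)` for `m ≤ n / 2`. Split `u n = ∑ K (n - j) u j` at `M` and `n - M`. The terms
with `j < M` contribute about `K n ∑ u`, those with `n - j ≤ M` about `s · (u / K) · K n` where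
`s = ∑ K`, and the middle range is negligible, since there one factor is `O(K n)` and the other is
summed over a tail. So `ρ n = u n / K n` satisfies `ρ n ≈ ∑ u + s ρ (n - O(1))`, and `s < 1` makes
this a contraction onto its fixed point `V = ∑ u / (1 - s) = (1 - s)⁻²`. The a priori bound
`u n = O(K n)` that starts the contraction comes from the same splitting applied to `K` itself:
`∑_{n₀ ≤ j < n} K (n - j) K j ≤ θ K n` with `θ < 1`, followed by induction on `n`.
-/

open Finset

theorem exists_pos_mul_le {a ε : ℝ} (ha : 0 ≤ a) (hε : 0 < ε) : ∃ η, 0 < η ∧ a * η ≤ ε := by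
  refine ⟨ε / (a + 1), by positivity, ?_⟩
  rw [mul_div_assoc', div_le_iff₀ (by positivity)]
  nlinarith

theorem abs_div_sub_le_iff {a b c d : ℝ} (hc : 0 < c) :
    |a / c - b| ≤ d ↔ |a - b * c| ≤ d * c := by
  rw [div_sub' hc.ne', abs_div, abs_of_pos hc, div_le_iff₀ hc, mul_comm c b]

theorem sum_range_eq_add_add (f : ℕ → ℝ) {M n : ℕ} (h : 2 * M ≤ n) :
    ∑ j ∈ range n, f j =
      ∑ j ∈ range M, f j + ∑ j ∈ Ico M (n - M), f j + ∑ j ∈ Ico (n - M) n, f j := by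
  rw [add_assoc, sum_Ico_consecutive _ (by omega) (by omega), sum_range_add_sum_Ico _ (by omega)]

theorem sum_Ico_sub_eq_sum_range (f : ℕ → ℝ) {M n : ℕ} (h : M ≤ n) :
    ∑ j ∈ Ico (n - M) n, f (n - j) = ∑ m ∈ range M, f (m + 1) := by
  rw [sum_Ico_reflect f _ (by omega), sum_Ico_eq_sum_range,
    show n + 1 - n = 1 by omega, show n + 1 - (n - M) - 1 = M by omega]
  simp_rw [add_comm 1]

theorem sum_Ico_le_tsum_nat_add {f : ℕ → ℝ} (hf : Summable f) (hf0 : ∀ n, 0 ≤ f n) (a b : ℕ) :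
    ∑ j ∈ Ico a b, f j ≤ ∑' i, f (i + a) := by
  rw [sum_Ico_eq_sum_range]
  simp_rw [add_comm a]
  exact ((summable_nat_add_iff a).2 hf).sum_le_tsum _ fun i _ => hf0 _

structure LongTailedDominated (K : ℕ → ℝ) : Prop where
  eventually_pos : ∀ᶠ n in atTop, 0 < K n
  tendsto_sub_div : ∀ j, Tendsto (fun n => K (n - j) / K n) atTop (𝓝 1)
  exists_le_mul : ∃ C, 0 ≤ C ∧ ∀ᶠ n in atTop, ∀ m, 2 * m ≤ n → K (n - m) ≤ C * K n

section PowerLaw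

variable {K L : ℕ → ℝ} {p c : ℝ}

theorem sub_mul_eq_of_eq_div_rpow (hKform : ∀ n, 1 ≤ n → K n = L n / (n : ℝ) ^ p)
    {n j : ℕ} (hj : j < n) :
    K (n - j) * L n = L (n - j) * ((n : ℝ) / (n - j : ℕ)) ^ p * K n := by
  have hn : (0 : ℝ) < n := by exact_mod_cast (by omega : 0 < n)
  have hnj : (0 : ℝ) < (n - j : ℕ) := by exact_mod_cast (by omega : 0 < n - j)
  rw [hKform n (by omega), hKform (n - j) (by omega), Real.div_rpow hn.le hnj.le]
  have := Real.rpow_pos_of_pos hn p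
  have := Real.rpow_pos_of_pos hnj p
  field_simp

theorem tendsto_sub_div_of_eq_div_rpow (hc : 0 < c)
    (hKform : ∀ n, 1 ≤ n → K n = L n / (n : ℝ) ^ p) (hL : Tendsto L atTop (𝓝 c)) (j : ℕ) :
    Tendsto (fun n => K (n - j) / K n) atTop (𝓝 1) := by
  have hquot : Tendsto (fun n : ℕ => (n : ℝ) / (n - j : ℕ)) atTop (𝓝 1) := by
    have h := (tendsto_natCast_div_add_atTop (j : ℝ)).inv₀ one_ne_zero
    rw [inv_one] at h
    refine (h.comp (tendsto_sub_atTop_nat j)).congr' ?_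
    filter_upwards [eventually_ge_atTop j] with n hn
    simp [Nat.cast_sub hn]
  have hlim := ((hL.comp (tendsto_sub_atTop_nat j)).div hL hc.ne').mul
    (hquot.rpow_const (p := p) (Or.inl one_ne_zero))
  rw [div_self hc.ne', Real.one_rpow, one_mul] at hlim
  refine hlim.congr' ?_
  filter_upwards [hL.eventually (eventually_gt_nhds hc), eventually_gt_atTop j] with n hLn hn
  have hKn : K n ≠ 0 := by
    rw [hKform n (by omega)]
    exact div_ne_zero hLn.ne' (Real.rpow_pos_of_pos (by exact_mod_cast (by omega : 0 < n)) p).ne'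
  have key := sub_mul_eq_of_eq_div_rpow hKform hn
  simp only [Pi.div_apply, Function.comp_apply]
  field_simp
  linarith

/-- With `c / 2 < L < 2 c` from some point on and `1 ≤ n / (n - m) ≤ 2`, the constant is
`4 · 2 ^ |p|`. -/
theorem exists_le_mul_of_eq_div_rpow (hc : 0 < c)
    (hKform : ∀ n, 1 ≤ n → K n = L n / (n : ℝ) ^ p) (hL : Tendsto L atTop (𝓝 c)) :
    ∃ C, 0 ≤ C ∧ ∀ᶠ n in atTop, ∀ m, 2 * m ≤ n → K (n - m) ≤ C * K n := by
  obtain ⟨N, hN⟩ := eventually_atTop.1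
    ((hL.eventually (eventually_gt_nhds (half_lt_self hc))).and
      (hL.eventually (eventually_lt_nhds (by linarith : c < 2 * c))))
  refine ⟨4 * 2 ^ |p|, by positivity, ?_⟩
  filter_upwards [eventually_ge_atTop (2 * N + 1)] with n hn m hm
  have hn0 : (0 : ℝ) < (n - m : ℕ) := by exact_mod_cast (by omega : 0 < n - m)
  have hquot1 : 1 ≤ (n : ℝ) / (n - m : ℕ) := by
    rw [one_le_div hn0]; exact_mod_cast Nat.sub_le n m
  have hquot2 : (n : ℝ) / (n - m : ℕ) ≤ 2 := by
    rw [div_le_iff₀ hn0]; exact_mod_cast (by omega : n ≤ 2 * (n - m))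
  have hpow : ((n : ℝ) / (n - m : ℕ)) ^ p ≤ 2 ^ |p| :=
    (Real.rpow_le_rpow_of_exponent_le hquot1 (le_abs_self p)).trans
      (Real.rpow_le_rpow (by linarith) hquot2 (abs_nonneg p))
  have hKnonneg : ∀ k, N ≤ k → 1 ≤ k → 0 ≤ K k := fun k hk hk1 => by
    rw [hKform k hk1]; exact div_nonneg (by linarith [(hN k hk).1]) (by positivity)
  have hKn := hKnonneg n (by omega) (by omega)
  have hKnm := hKnonneg (n - m) (by omega) (by omega)
  have hLn := (hN n (by omega)).1
  have hbound : K (n - m) * L n ≤ 2 * c * 2 ^ |p| * K n := by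
    rw [sub_mul_eq_of_eq_div_rpow hKform (by omega : m < n)]
    exact mul_le_mul_of_nonneg_right
      (mul_le_mul (hN (n - m) (by omega)).2.le hpow (by positivity) (by positivity)) hKn
  nlinarith [mul_le_mul_of_nonneg_left hLn.le hKnm]

theorem LongTailedDominated.of_eq_div_rpow (hc : 0 < c)
    (hKform : ∀ n, 1 ≤ n → K n = L n / (n : ℝ) ^ p) (hL : Tendsto L atTop (𝓝 c)) :
    LongTailedDominated K where
  eventually_pos := by
    filter_upwards [hL.eventually (eventually_gt_nhds hc), eventually_ge_atTop 1] with n hLn hn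
    rw [hKform n hn]
    positivity
  tendsto_sub_div := tendsto_sub_div_of_eq_div_rpow hc hKform hL
  exists_le_mul := exists_le_mul_of_eq_div_rpow hc hKform hL

end PowerLaw

section Convolution

variable {K v : ℕ → ℝ}

/-- In the middle range one of `j`, `n - j` is at least `n / 2`, so that factor is `O(K n)` and
the other one is summed over a tail. -/
theorem sum_Ico_mul_le_of_dominated (hK : Summable K) (hv : Summable v) (hK0 : ∀ n, 0 ≤ K n)
    (hv0 : ∀ n, 0 ≤ v n) {B C : ℝ} (hB : 0 ≤ B) (hC : 0 ≤ C) {M n : ℕ} (hMn : M ≤ n)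
    (hdom : ∀ m, 2 * m ≤ n → K (n - m) ≤ C * K n) (hvK : ∀ j, M ≤ j → v j ≤ B * K j) :
    ∑ j ∈ Ico M (n - M), K (n - j) * v j ≤
      C * K n * (∑' i, v (i + M) + B * ∑' i, K (i + (M + 1))) := by
  have hterm : ∀ j ∈ Ico M (n - M), K (n - j) * v j ≤ C * K n * (v j + B * K (n - j)) := by
    intro j hj
    obtain ⟨hMj, hjn⟩ := mem_Ico.1 hj
    have hCK : 0 ≤ C * K n := mul_nonneg hC (hK0 n)
    rcases le_or_gt (2 * j) n with h | h
    · nlinarith [mul_le_mul_of_nonneg_right (hdom j h) (hv0 j), mul_nonneg hB (hK0 (n - j))]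
    · have hKj : K j ≤ C * K n := by
        have := hdom (n - j) (by omega)
        rwa [Nat.sub_sub_self (by omega)] at this
      have hvj : v j ≤ B * (C * K n) := (hvK j hMj).trans (by gcongr)
      nlinarith [mul_le_mul_of_nonneg_left hvj (hK0 (n - j)), hv0 j]
  have hKtail : ∑ j ∈ Ico M (n - M), K (n - j) ≤ ∑' i, K (i + (M + 1)) := by
    rw [sum_Ico_reflect K _ (by omega), show n + 1 - (n - M) = M + 1 by omega]
    exact sum_Ico_le_tsum_nat_add hK hK0 _ _
  calc ∑ j ∈ Ico M (n - M), K (n - j) * v j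
      ≤ ∑ j ∈ Ico M (n - M), C * K n * (v j + B * K (n - j)) := sum_le_sum hterm
    _ = C * K n * (∑ j ∈ Ico M (n - M), v j + B * ∑ j ∈ Ico M (n - M), K (n - j)) := by
      rw [← mul_sum, sum_add_distrib, mul_sum]
    _ ≤ C * K n * (∑' i, v (i + M) + B * ∑' i, K (i + (M + 1))) := by
      gcongr
      · exact mul_nonneg hC (hK0 n)
      · exact sum_Ico_le_tsum_nat_add hv hv0 _ _

theorem abs_sum_Ico_mul_sub_le (hK : Summable K) (hK0 : ∀ n, 0 ≤ K n) {M n : ℕ} (hMn : M ≤ n)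
    {w δ : ℝ} (hδ : 0 ≤ δ) (hv : ∀ j ∈ Ico (n - M) n, |v j - w| ≤ δ) :
    |∑ j ∈ Ico (n - M) n, K (n - j) * v j - (∑ m ∈ range M, K (m + 1)) * w| ≤
      (∑' m, K (m + 1)) * δ := by
  rw [← sum_Ico_sub_eq_sum_range K hMn, sum_mul, ← sum_sub_distrib]
  calc |∑ j ∈ Ico (n - M) n, (K (n - j) * v j - K (n - j) * w)|
      ≤ ∑ j ∈ Ico (n - M) n, K (n - j) * δ := by
        refine (abs_sum_le_sum_abs _ _).trans (sum_le_sum fun j hj => ?_)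
        rw [← mul_sub, abs_mul, abs_of_nonneg (hK0 _)]
        exact mul_le_mul_of_nonneg_left (hv j hj) (hK0 _)
    _ ≤ (∑' m, K (m + 1)) * δ := by
      rw [← sum_mul, sum_Ico_sub_eq_sum_range K hMn]
      exact mul_le_mul_of_nonneg_right
        (((summable_nat_add_iff 1).2 hK).sum_le_tsum _ fun i _ => hK0 _) hδ

theorem LongTailedDominated.tendsto_sum_range_mul_div (hK : LongTailedDominated K)
    (v : ℕ → ℝ) (M : ℕ) :
    Tendsto (fun n => (∑ j ∈ range M, K (n - j) * v j) / K n) atTop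
      (𝓝 (∑ j ∈ range M, v j)) := by
  simp_rw [sum_div, mul_div_right_comm]
  exact tendsto_finsetSum _ fun j _ => by simpa using (hK.tendsto_sub_div j).mul_const (v j)

theorem LongTailedDominated.eventually_abs_sub_le (hK : LongTailedDominated K) (M : ℕ) {η : ℝ}
    (hη : 0 < η) : ∀ᶠ n in atTop, ∀ j ∈ Ico (n - M) n, |K j - K n| ≤ η * K n := by
  have hratio : ∀ᶠ n in atTop, ∀ m ∈ range (M + 1), |K (n - m) / K n - 1| < η :=
    (eventually_all_finset _).2 fun m _ => by
      simpa only [Real.dist_eq] using Metric.tendsto_nhds.1 (hK.tendsto_sub_div m) η hη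
  filter_upwards [hratio, hK.eventually_pos] with n hn hpos j hj
  obtain ⟨hnj, hjn⟩ := mem_Ico.1 hj
  have hj' := hn (n - j) (mem_range.2 (by omega))
  rw [Nat.sub_sub_self hjn.le, div_sub_one hpos.ne', abs_div, abs_of_pos hpos,
    div_lt_iff₀ hpos] at hj'
  exact hj'.le

theorem LongTailedDominated.exists_eventually_sum_Ico_mul_le (hK : LongTailedDominated K)
    (hKs : Summable K) (hK0 : ∀ n, 0 ≤ K n) {θ : ℝ} (hθ : ∑' m, K (m + 1) < θ) (N : ℕ) :
    ∃ n₀, N ≤ n₀ ∧ ∀ᶠ n in atTop, ∑ j ∈ Ico n₀ n, K (n - j) * K j ≤ θ * K n := by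
  set s := ∑' m, K (m + 1)
  have hs0 : 0 ≤ s := tsum_nonneg fun m => hK0 _
  obtain ⟨C, hC, hdom⟩ := hK.exists_le_mul
  have htail : Tendsto (fun M => C * (∑' i, K (i + M) + 1 * ∑' i, K (i + (M + 1))))
      atTop (𝓝 0) := by
    simpa using ((tendsto_sum_nat_add K).add
      ((tendsto_sum_nat_add K).comp (tendsto_add_atTop_nat 1))).const_mul C
  obtain ⟨n₀, hsmall, hNn₀⟩ := ((htail.eventually
    (gt_mem_nhds (by linarith : (0 : ℝ) < (θ - s) / 2))).and (eventually_ge_atTop N)).exists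
  refine ⟨n₀, hNn₀, ?_⟩
  obtain ⟨η, hη, hsη⟩ := exists_pos_mul_le hs0 (by linarith : (0 : ℝ) < (θ - s) / 2)
  filter_upwards [hdom, hK.eventually_abs_sub_le n₀ hη, eventually_ge_atTop (2 * n₀)]
    with n hdomn hwin hn
  have hKn := hK0 n
  have hmid := sum_Ico_mul_le_of_dominated hKs hKs hK0 hK0 zero_le_one hC (M := n₀) (by omega)
    hdomn fun j _ => (one_mul (K j)).ge
  have htail := abs_sum_Ico_mul_sub_le hKs hK0 (by omega : n₀ ≤ n) (w := K n)
    (mul_nonneg hη.le hKn) hwin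
  have hsM : ∑ m ∈ range n₀, K (m + 1) ≤ s :=
    ((summable_nat_add_iff 1).2 hKs).sum_le_tsum _ fun i _ => hK0 _
  rw [← sum_Ico_consecutive _ (by omega : n₀ ≤ n - n₀) (by omega : n - n₀ ≤ n)]
  nlinarith [(abs_le.1 htail).2, mul_le_mul_of_nonneg_left hsmall.le hKn,
    mul_le_mul_of_nonneg_right hsM hKn, mul_le_mul_of_nonneg_right hsη hKn]

end Convolution

section Renewal

variable {K : ℕ → ℝ}

theorem renewalMass_nonneg (hK0 : ∀ n, 0 ≤ K n) (n : ℕ) : 0 ≤ renewalMass K n := by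
  induction n using Nat.strong_induction_on with
  | _ n ih =>
    cases n with
    | zero => simp [renewalMass]
    | succ n =>
      rw [renewalMass]
      exact sum_nonneg fun m _ => mul_nonneg (hK0 _) (ih _ (by omega))

theorem renewalMass_eq_sum (K : ℕ → ℝ) {n : ℕ} (hn : n ≠ 0) :
    renewalMass K n = ∑ j ∈ range n, K (n - j) * renewalMass K j := by
  obtain ⟨n, rfl⟩ := Nat.exists_eq_succ_of_ne_zero hn
  rw [renewalMass]
  conv_rhs => rw [← sum_range_reflect]
  refine sum_congr rfl fun m hm => ?_
  rw [mem_range] at hm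
  congr 2; omega

theorem renewalMass_le_of_forall_Ico_le (hK0 : ∀ n, 0 ≤ K n) {n₀ n : ℕ} (hn : n ≠ 0)
    (hn₀ : 2 * n₀ ≤ n) {B C θ : ℝ} (hB : 0 ≤ B)
    (hdom : ∀ m, 2 * m ≤ n → K (n - m) ≤ C * K n)
    (hconv : ∑ j ∈ Ico n₀ n, K (n - j) * K j ≤ θ * K n)
    (hIH : ∀ j ∈ Ico n₀ n, renewalMass K j ≤ B * K j) :
    renewalMass K n ≤ (C * ∑ j ∈ range n₀, renewalMass K j + B * θ) * K n := by
  rw [renewalMass_eq_sum K hn, ← sum_range_add_sum_Ico _ (by omega : n₀ ≤ n)]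
  have hhead : ∑ j ∈ range n₀, K (n - j) * renewalMass K j ≤
      C * K n * ∑ j ∈ range n₀, renewalMass K j := by
    rw [mul_sum]
    exact sum_le_sum fun j hj => mul_le_mul_of_nonneg_right
      (hdom j (by rw [mem_range] at hj; omega)) (renewalMass_nonneg hK0 j)
  have hrest : ∑ j ∈ Ico n₀ n, K (n - j) * renewalMass K j ≤ B * (θ * K n) := by
    refine le_trans ?_ (mul_le_mul_of_nonneg_left hconv hB)
    rw [mul_sum]
    exact sum_le_sum fun j hj => by
      nlinarith [mul_le_mul_of_nonneg_left (hIH j hj) (hK0 (n - j))]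
  linarith

theorem LongTailedDominated.exists_eventually_renewalMass_le (hK : LongTailedDominated K)
    (hKs : Summable K) (hK0 : ∀ n, 0 ≤ K n) (hs : ∑' m, K (m + 1) < 1) :
    ∃ B, ∀ᶠ n in atTop, renewalMass K n ≤ B * K n := by
  obtain ⟨θ, hsθ, hθ⟩ := exists_between hs
  obtain ⟨n₁, hpos⟩ := eventually_atTop.1 hK.eventually_pos
  obtain ⟨n₀, hn₁, hconv⟩ := hK.exists_eventually_sum_Ico_mul_le hKs hK0 hsθ n₁
  obtain ⟨C, hC, hdom⟩ := hK.exists_le_mul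
  obtain ⟨N, hN⟩ := eventually_atTop.1 (hconv.and hdom)
  set A := C * ∑ j ∈ range n₀, renewalMass K j
  have hA : 0 ≤ A / (1 - θ) :=
    div_nonneg (mul_nonneg hC (sum_nonneg fun j _ => renewalMass_nonneg hK0 j)) (by linarith)
  set N' := N + 2 * n₀ + 1
  have hρ : ∀ k, 0 ≤ renewalMass K k / K k :=
    fun k => div_nonneg (renewalMass_nonneg hK0 k) (hK0 k)
  refine ⟨A / (1 - θ) + ∑ k ∈ range N', renewalMass K k / K k,
    eventually_atTop.2 ⟨n₀, fun n hn => ?_⟩⟩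
  induction n using Nat.strong_induction_on with
  | _ n ih =>
    by_cases hnN : n < N'
    · have hle : renewalMass K n / K n ≤ A / (1 - θ) + ∑ k ∈ range N', renewalMass K k / K k :=
        (single_le_sum (fun k _ => hρ k) (mem_range.2 hnN)).trans (le_add_of_nonneg_left hA)
      rwa [div_le_iff₀ (hpos n (by omega))] at hle
    · have hstep := renewalMass_le_of_forall_Ico_le hK0 (by omega) (by omega)
        (add_nonneg hA (sum_nonneg fun k _ => hρ k)) (hN n (by omega)).2 (hN n (by omega)).1
        (fun j hj => ih j (mem_Ico.1 hj).2 (mem_Ico.1 hj).1)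
      refine hstep.trans (mul_le_mul_of_nonneg_right ?_ (hK0 n))
      have : A ≤ A / (1 - θ) * (1 - θ) := by rw [div_mul_cancel₀ _ (by linarith)]
      nlinarith [sum_nonneg fun k (_ : k ∈ range N') => hρ k]

theorem LongTailedDominated.summable_renewalMass (hK : LongTailedDominated K)
    (hKs : Summable K) (hK0 : ∀ n, 0 ≤ K n) (hs : ∑' m, K (m + 1) < 1) :
    Summable (renewalMass K) := by
  obtain ⟨B, hB⟩ := hK.exists_eventually_renewalMass_le hKs hK0 hs
  refine (hKs.mul_left B).of_norm_bounded_eventually_nat (hB.mono fun n hn => ?_)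
  rwa [Real.norm_of_nonneg (renewalMass_nonneg hK0 n)]

/-- The Cauchy product gives `∑ u = 1 + s ∑ u`. -/
theorem tsum_renewalMass (hKs : Summable K) (hK0 : ∀ n, 0 ≤ K n)
    (hu : Summable (renewalMass K)) :
    ∑' n, renewalMass K n = (1 - ∑' m, K (m + 1))⁻¹ := by
  have hKs1 := (summable_nat_add_iff 1).2 hKs
  have hshift : ∑' n, renewalMass K (n + 1) = (∑' m, K (m + 1)) * ∑' n, renewalMass K n := by
    rw [hKs1.tsum_mul_tsum_eq_tsum_sum_range hu
      (hKs1.mul_of_nonneg hu (fun _ => hK0 _) (renewalMass_nonneg hK0))]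
    exact tsum_congr fun n => by rw [renewalMass]
  have hU := hu.tsum_eq_zero_add
  rw [hshift, show renewalMass K 0 = 1 by rw [renewalMass]] at hU
  exact eq_inv_of_mul_eq_one_left (by linear_combination hU)

/-- From `V = ∑ u + s V`: `u n - V K n` is `(head - (∑_{j<M} u j) K n) + middle +
(window - (∑_{m<M} K (m + 1)) V K n)` minus the tails of `∑ u` and of `s V`, times `K n`. -/
theorem abs_renewalMass_sub_mul_le (hKs : Summable K) (hK0 : ∀ n, 0 ≤ K n)
    (hu : Summable (renewalMass K)) {V D η C : ℝ} (hV0 : 0 ≤ V) (hD0 : 0 ≤ D) (hη : 0 ≤ η)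
    (hC : 0 ≤ C) (hV : V = ∑' n, renewalMass K n + (∑' m, K (m + 1)) * V) {N M n : ℕ}
    (hNM : N ≤ M) (hn : 2 * M < n)
    (hcomp : ∀ j, N ≤ j → |renewalMass K j - V * K j| ≤ D * K j)
    (hdom : ∀ m, 2 * m ≤ n → K (n - m) ≤ C * K n)
    (hwin : ∀ j ∈ Ico (n - M) n, |K j - K n| ≤ η * K n) :
    |renewalMass K n - V * K n| ≤
      |∑ j ∈ range M, K (n - j) * renewalMass K j - (∑ j ∈ range M, renewalMass K j) * K n| +
        (∑' i, renewalMass K (i + M) +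
          C * (∑' i, renewalMass K (i + M) + (V + D) * ∑' i, K (i + (M + 1))) +
          V * ∑' i, K (i + (M + 1)) + (∑' m, K (m + 1)) * (D + η * (D + V))) * K n := by
  have hKn := hK0 n
  have hsplit := renewalMass_eq_sum K (by omega : n ≠ 0)
  rw [sum_range_eq_add_add _ (by omega : 2 * M ≤ n)] at hsplit
  have hmid := sum_Ico_mul_le_of_dominated hKs hu hK0 (renewalMass_nonneg hK0)
    (by positivity : 0 ≤ V + D) hC (M := M) (by omega) hdom
    fun j hj => by linarith [(abs_le.1 (hcomp j (by omega))).2]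
  have hmid0 : 0 ≤ ∑ j ∈ Ico M (n - M), K (n - j) * renewalMass K j :=
    sum_nonneg fun j _ => mul_nonneg (hK0 _) (renewalMass_nonneg hK0 j)
  have htail := abs_sum_Ico_mul_sub_le hKs hK0 (by omega : M ≤ n) (w := V * K n)
    (δ := (D + η * (D + V)) * K n) (by positivity) fun j hj => by
      have h1 := hcomp j (by have := (mem_Ico.1 hj).1; omega)
      have h2 := hwin j hj
      calc |renewalMass K j - V * K n|
          ≤ |renewalMass K j - V * K j| + V * |K j - K n| := by
            rw [← abs_of_nonneg hV0, ← abs_mul, abs_of_nonneg hV0, mul_sub]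
            exact abs_sub_le _ _ _
        _ ≤ (D + η * (D + V)) * K n := by
            nlinarith [(abs_le.1 h2).2, mul_le_mul_of_nonneg_left h2 hV0]
  have hS := ((summable_nat_add_iff 1).2 hKs).sum_add_tsum_nat_add M
  simp only [add_assoc] at hS
  rw [← hu.sum_add_tsum_nat_add M, ← hS] at hV
  have hVK := congrArg (· * K n) hV
  have hτu0 : 0 ≤ ∑' i, renewalMass K (i + M) := tsum_nonneg fun i => renewalMass_nonneg hK0 _
  have hτK0 : 0 ≤ ∑' i, K (i + (M + 1)) := tsum_nonneg fun i => hK0 _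
  rw [abs_le] at htail ⊢
  constructor <;> nlinarith [le_abs_self (∑ j ∈ range M, K (n - j) * renewalMass K j -
    (∑ j ∈ range M, renewalMass K j) * K n), neg_abs_le (∑ j ∈ range M, K (n - j) *
    renewalMass K j - (∑ j ∈ range M, renewalMass K j) * K n), mul_nonneg hτu0 hKn,
    mul_nonneg (mul_nonneg hτK0 hV0) hKn]

theorem LongTailedDominated.eventually_abs_renewalMass_div_sub_le (hK : LongTailedDominated K)
    (hKs : Summable K) (hK0 : ∀ n, 0 ≤ K n) (hu : Summable (renewalMass K)) {V D : ℝ}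
    (hV0 : 0 ≤ V) (hV : V = ∑' n, renewalMass K n + (∑' m, K (m + 1)) * V)
    (hD : ∀ᶠ n in atTop, |renewalMass K n / K n - V| ≤ D) {ε : ℝ} (hε : 0 < ε) :
    ∀ᶠ n in atTop, |renewalMass K n / K n - V| ≤ (∑' m, K (m + 1)) * D + ε := by
  have hs0 : 0 ≤ ∑' m, K (m + 1) := tsum_nonneg fun m => hK0 _
  obtain ⟨N, hN⟩ := eventually_atTop.1 (hD.and hK.eventually_pos)
  have hD0 : 0 ≤ D := (abs_nonneg _).trans (hN N le_rfl).1
  obtain ⟨C, hC, hdom⟩ := hK.exists_le_mul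
  have hτu := tendsto_sum_nat_add (renewalMass K)
  have hτK := (tendsto_sum_nat_add K).comp (tendsto_add_atTop_nat 1)
  have hE : Tendsto (fun M => ∑' i, renewalMass K (i + M) + C * (∑' i, renewalMass K (i + M) +
      (V + D) * ∑' i, K (i + (M + 1))) + V * ∑' i, K (i + (M + 1))) atTop (𝓝 0) := by
    simpa using (hτu.add ((hτu.add (hτK.const_mul (V + D))).const_mul C)).add (hτK.const_mul V)
  obtain ⟨M, hEM, hNM⟩ :=
    ((hE.eventually (gt_mem_nhds (half_pos hε))).and (eventually_ge_atTop N)).exists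
  obtain ⟨η, hη, hsη⟩ :=
    exists_pos_mul_le (mul_nonneg hs0 (add_nonneg hD0 hV0)) (by positivity : 0 < ε / 4)
  have hhead := Metric.tendsto_nhds.1 (hK.tendsto_sum_range_mul_div (renewalMass K) M) (ε / 4)
    (by positivity)
  filter_upwards [hhead, hK.eventually_abs_sub_le M hη, hdom, hK.eventually_pos,
    eventually_gt_atTop (2 * M)] with n hheadn hwin hdomn hKn hn
  rw [Real.dist_eq] at hheadn
  have hsplit := abs_renewalMass_sub_mul_le hKs hK0 hu hV0 hD0 hη.le hC hV hNM hn
    (fun j hj => (abs_div_sub_le_iff (hN j hj).2).1 (hN j hj).1) hdomn hwin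
  rw [abs_div_sub_le_iff hKn]
  nlinarith [(abs_div_sub_le_iff hKn).1 hheadn.le, mul_lt_mul_of_pos_right hEM hKn,
    mul_le_mul_of_nonneg_right hsη hKn.le]

end Renewal

/-- Iterating `D ↦ s * D + (1 - s) * a / 2` from a bound `B` pushes the eventual bound below `a`. -/
theorem tendsto_zero_of_eventually_le_mul_add {ι : Type*} {l : Filter ι} {d : ι → ℝ} {s : ℝ}
    (hs0 : 0 ≤ s) (hs1 : s < 1) (hd : ∀ i, 0 ≤ d i) (hbdd : ∃ B, ∀ᶠ i in l, d i ≤ B)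
    (hstep : ∀ D ε, 0 < ε → (∀ᶠ i in l, d i ≤ D) → ∀ᶠ i in l, d i ≤ s * D + ε) :
    Tendsto d l (𝓝 0) := by
  obtain ⟨B, hB⟩ := hbdd
  refine tendsto_order.2 ⟨fun a ha => .of_forall fun i => ha.trans_le (hd i), fun a ha => ?_⟩
  have hiter : ∀ k : ℕ, ∀ᶠ i in l, d i ≤ s ^ k * B + a / 2 := by
    intro k
    induction k with
    | zero => exact hB.mono fun i hi => by linarith
    | succ k ih =>
      refine (hstep _ ((1 - s) * (a / 2)) (by nlinarith) ih).mono fun i hi => hi.trans_eq ?_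
      ring
  obtain ⟨k, hk⟩ := (((tendsto_pow_atTop_nhds_zero_of_lt_one hs0 hs1).mul_const B).eventually
    (gt_mem_nhds (show 0 * B < a / 2 by simpa using half_pos ha))).exists
  exact (hiter k).mono fun i hi => by linarith

theorem renewal_mass_asymptotics_terminating_general
    (α : ℝ)
    (K L : ℕ → ℝ) (cK : ℝ) (hcK : 0 < cK)
    (hKnn : ∀ n, 0 ≤ K n)
    (hKsummable : Summable fun n : ℕ => K (n + 1))
    (hKform : ∀ n : ℕ, 1 ≤ n → K n = L n / (n : ℝ) ^ (1 + α))
    (hL : Tendsto L atTop (nhds cK))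
    (hterm : 0 < 1 - ∑' n : ℕ, K (n + 1)) :
    Tendsto (fun n : ℕ => renewalMass K n * (1 - ∑' m : ℕ, K (m + 1)) ^ 2 / K n)
      atTop (nhds 1) := by
  have hK := LongTailedDominated.of_eq_div_rpow hcK hKform hL
  have hKs : Summable K := (summable_nat_add_iff 1).1 hKsummable
  have hs1 : ∑' m, K (m + 1) < 1 := by linarith
  have hu := hK.summable_renewalMass hKs hKnn hs1
  set V := ((1 - ∑' m, K (m + 1)) ^ 2)⁻¹ with hVdef
  have hV0 : 0 ≤ V := by positivity
  have hV : V = ∑' n, renewalMass K n + (∑' m, K (m + 1)) * V := by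
    rw [tsum_renewalMass hKs hKnn hu, hVdef]
    field_simp
    ring
  have hbdd : ∃ B, ∀ᶠ n in atTop, |renewalMass K n / K n - V| ≤ B := by
    obtain ⟨B, hB⟩ := hK.exists_eventually_renewalMass_le hKs hKnn hs1
    refine ⟨B + V, (hB.and hK.eventually_pos).mono fun n ⟨hn, hKn⟩ => abs_le.2 ⟨?_, ?_⟩⟩ <;>
      linarith [(div_le_iff₀ hKn).2 hn, div_nonneg (renewalMass_nonneg hKnn n) hKn.le]
  have hρ : Tendsto (fun n => renewalMass K n / K n) atTop (𝓝 V) := by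
    rw [tendsto_iff_norm_sub_tendsto_zero]
    exact tendsto_zero_of_eventually_le_mul_add (tsum_nonneg fun m => hKnn _) hs1
      (fun _ => norm_nonneg _) hbdd fun D ε hε hD =>
        hK.eventually_abs_renewalMass_div_sub_le hKs hKnn hu hV0 hV hD hε
  have hlim := hρ.mul_const ((1 - ∑' m, K (m + 1)) ^ 2)
  rw [inv_mul_cancel₀ (by positivity)] at hlim
  exact hlim.congr fun n => div_mul_eq_mul_div _ _ _

theorem renewal_mass_asymptotics_terminating
    (α : ℝ) (hα : 0 < α)
    (K L : ℕ → ℝ) (cK : ℝ) (hcK : 0 < cK)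
    (hK0 : K 0 = 0) (hKnn : ∀ n, 0 ≤ K n)
    (hKsummable : Summable fun n : ℕ => K (n + 1))
    (hKsum : ∑' n : ℕ, K (n + 1) ≤ 1)
    (hKform : ∀ n : ℕ, 1 ≤ n → K n = L n / (n : ℝ) ^ (1 + α))
    (hL : Tendsto L atTop (nhds cK))
    (hterm : 0 < 1 - ∑' n : ℕ, K (n + 1)) :
    Tendsto (fun n : ℕ => renewalMass K n * (1 - ∑' m : ℕ, K (m + 1)) ^ 2 / K n)
      atTop (nhds 1) :=
  renewal_mass_asymptotics_terminating_general α K L cK hcK hKnn hKsummable hKform hL hterm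
end

section
/- Set h_c(0) := −log Σ_{n≥1} K(n). For every h ≥ h_c(0) (equivalently, e^h Σ_{n≥1} K(n) ≥ 1) there exists a unique b(h) ≥ 0 such that Σ_{n≥1} e^{h − b(h) n} K(n) = 1; set b(h) := 0 for h < h_c(0). Then for every h ∈ ℝ the limit lim_{N→∞} (1/N) log Z^c_{N,h} exists and equals b(h). -/
open MeasureTheory ProbabilityTheory Filter Topology

/-!
Splitting off the first renewal epoch shows that `Z^c_{N,h}` is the renewal mass of the kernel
`q m = e^h K(m)`, and tilting the kernel by `e^{-a m}` multiplies `Z^c_{N,h}` by `e^{-a N}`.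
If the kernel tilted by `e^{-b m}` has total mass at most `1`, so has every renewal mass, hence
`log Z^c_{N,h} ≤ b N`. Conversely, for `a < b` some truncation of the kernel tilted by `e^{-a m}`
has mass `c > 1`; since `c ^ k` is dominated by a sum of `k M + 1` renewal masses, one of them,
`Z^c_{N,h} e^{-a N}`, exceeds `1`, and supermultiplicativity `Z_m Z_n ≤ Z_{m+n}` propagates
`log Z^c_{N,h} / N > a` to all large `N`. For `h < h_c(0)`, where `b = 0`, the truncation can be
a single term, because `K` decays only polynomially.
-/

namespace Composition

lemma blocks_ne_nil_of_succ {n : ℕ} (c : Composition (n + 1)) : c.blocks ≠ [] :=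
  mt c.blocks_eq_nil.1 n.succ_ne_zero

/-- The first block is `m + 1`, the remaining ones form a composition of `n - m`. -/
def headTailEquiv (n : ℕ) : Composition (n + 1) ≃ Σ m : Fin (n + 1), Composition (n - m) where
  toFun c :=
    have hne := c.blocks_ne_nil_of_succ
    have hhead : 1 ≤ c.blocks.head hne := c.one_le_blocks (List.head_mem hne)
    have hsum : c.blocks.head hne + c.blocks.tail.sum = n + 1 := by
      rw [← List.sum_cons, List.cons_head_tail, c.blocks_sum]
    ⟨⟨c.blocks.head hne - 1, by omega⟩,
      ⟨c.blocks.tail, fun hi => c.blocks_pos (List.mem_of_mem_tail hi), by simp only; omega⟩⟩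
  invFun p :=
    ⟨(p.1 + 1) :: p.2.blocks, by
      rintro i (_ | ⟨_, hi⟩)
      exacts [Nat.succ_pos _, p.2.blocks_pos hi], by
      have := p.1.2
      rw [List.sum_cons, p.2.blocks_sum]
      omega⟩
  left_inv c := by
    ext1
    simp only
    rw [Nat.sub_add_cancel (c.one_le_blocks (List.head_mem _)), List.cons_head_tail]
  right_inv _ := rfl

lemma prod_blocksFun {M : Type*} [CommMonoid M] (g : ℕ → M) {n : ℕ} (c : Composition n) :
    ∏ i, g (c.blocksFun i) = (c.blocks.map g).prod := by
  conv_rhs => rw [← c.ofFn_blocksFun, List.map_ofFn, List.prod_ofFn]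
  rfl

end Composition

lemma ZcHom_eq_sum_prod (K : ℕ → ℝ) (h : ℝ) (N : ℕ) :
    ZcHom K h N = ∑ c : Composition N, (c.blocks.map fun m => Real.exp h * K m).prod := by
  simp only [ZcHom, Zc, ← Composition.prod_blocksFun, mul_comm (Real.exp h)]

lemma ZcHom_zero (K : ℕ → ℝ) (h : ℝ) : ZcHom K h 0 = 1 := by
  have hnil (c : Composition 0) : c.blocks = [] := c.blocks_eq_nil.2 rfl
  simp [ZcHom_eq_sum_prod, hnil, composition_card]

lemma ZcHom_succ (K : ℕ → ℝ) (h : ℝ) (N : ℕ) :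
    ZcHom K h (N + 1) = ∑ m ∈ Finset.range (N + 1), Real.exp h * K (m + 1) * ZcHom K h (N - m) := by
  rw [ZcHom_eq_sum_prod, ← (Composition.headTailEquiv N).symm.sum_comp, Fintype.sum_sigma,
    ← Fin.sum_univ_eq_sum_range]
  refine Finset.sum_congr rfl fun m _ => ?_
  rw [ZcHom_eq_sum_prod, Finset.mul_sum]
  rfl

lemma ZcHom_eq_renewalMass (K : ℕ → ℝ) (h : ℝ) (N : ℕ) :
    ZcHom K h N = renewalMass (fun m => Real.exp h * K m) N := by
  induction N using Nat.strong_induction_on with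
  | _ N ih =>
    match N with
    | 0 => rw [ZcHom_zero, renewalMass]
    | n + 1 =>
      rw [ZcHom_succ, renewalMass]
      exact Finset.sum_congr rfl fun m _ => by rw [ih (n - m) (by omega)]

section renewalMass

variable {q : ℕ → ℝ}

lemma renewalMass_nonneg_s2 (hq : ∀ n, 0 ≤ q n) (N : ℕ) : 0 ≤ renewalMass q N := by
  induction N using Nat.strong_induction_on with
  | _ N ih =>
    match N with
    | 0 => rw [renewalMass]; exact zero_le_one
    | n + 1 =>
      rw [renewalMass]
      exact Finset.sum_nonneg fun m _ => mul_nonneg (hq _) (ih (n - m) (by omega))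

lemma sum_mul_renewalMass_le (hq : ∀ n, 0 ≤ q n) {N : ℕ} {s : Finset ℕ}
    (hs : s ⊆ Finset.range (N + 1)) :
    ∑ m ∈ s, q (m + 1) * renewalMass q (N - m) ≤ renewalMass q (N + 1) := by
  rw [renewalMass]
  exact Finset.sum_le_sum_of_subset_of_nonneg hs fun m _ _ =>
    mul_nonneg (hq _) (renewalMass_nonneg_s2 hq _)

lemma le_renewalMass (hq : ∀ n, 0 ≤ q n) (N : ℕ) : q (N + 1) ≤ renewalMass q (N + 1) := by
  simpa [renewalMass] using sum_mul_renewalMass_le hq (s := {N})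
    (Finset.singleton_subset_iff.2 (Finset.self_mem_range_succ N))

lemma renewalMass_mul_le (hq : ∀ n, 0 ≤ q n) (m n : ℕ) :
    renewalMass q m * renewalMass q n ≤ renewalMass q (m + n) := by
  induction m using Nat.strong_induction_on with
  | _ m ih =>
    match m with
    | 0 => rw [renewalMass, one_mul, zero_add]
    | k + 1 =>
      rw [renewalMass, Finset.sum_mul, show k + 1 + n = k + n + 1 by omega]
      calc ∑ j ∈ Finset.range (k + 1), q (j + 1) * renewalMass q (k - j) * renewalMass q n
          ≤ ∑ j ∈ Finset.range (k + 1), q (j + 1) * renewalMass q (k + n - j) := by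
            refine Finset.sum_le_sum fun j hj => ?_
            have hj := Finset.mem_range.1 hj
            rw [mul_assoc, show k + n - j = k - j + n by omega]
            exact mul_le_mul_of_nonneg_left (ih (k - j) (by omega)) (hq _)
        _ ≤ renewalMass q (k + n + 1) :=
            sum_mul_renewalMass_le hq (Finset.range_subset_range.2 (by omega))

lemma renewalMass_le_one (hq : ∀ n, 0 ≤ q n) (hs : Summable fun n => q (n + 1))
    (hle : ∑' n, q (n + 1) ≤ 1) (N : ℕ) : renewalMass q N ≤ 1 := by
  induction N using Nat.strong_induction_on with
  | _ N ih =>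
    match N with
    | 0 => rw [renewalMass]
    | n + 1 =>
      rw [renewalMass]
      calc ∑ m ∈ Finset.range (n + 1), q (m + 1) * renewalMass q (n - m)
          ≤ ∑ m ∈ Finset.range (n + 1), q (m + 1) :=
            Finset.sum_le_sum fun m _ => mul_le_of_le_one_right (hq _) (ih (n - m) (by omega))
        _ ≤ ∑' m, q (m + 1) := hs.sum_le_tsum _ fun m _ => hq _
        _ ≤ 1 := hle

lemma renewalMass_mul_pow (x : ℝ) (N : ℕ) :
    renewalMass (fun m => q m * x ^ m) N = renewalMass q N * x ^ N := by
  induction N using Nat.strong_induction_on with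
  | _ N ih =>
    match N with
    | 0 => simp [renewalMass]
    | n + 1 =>
      rw [renewalMass, renewalMass, Finset.sum_mul]
      refine Finset.sum_congr rfl fun m hm => ?_
      have hm := Finset.mem_range.1 hm
      rw [ih (n - m) (by omega), show n + 1 = (m + 1) + (n - m) by omega, pow_add]
      ring

/-- Each term of `(∑_{m < M} q (m + 1)) ^ k` is the weight of a renewal path of `k` jumps, each of
size at most `M`, hence is counted in some `renewalMass q N` with `N ≤ k * M`. -/
lemma sum_pow_le_sum_renewalMass (hq : ∀ n, 0 ≤ q n) (M k : ℕ) :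
    (∑ m ∈ Finset.range M, q (m + 1)) ^ k
      ≤ ∑ N ∈ Finset.range (k * (M + 1) + 1), renewalMass q N := by
  set c := ∑ m ∈ Finset.range M, q (m + 1)
  have hstep (n : ℕ) : c * ∑ j ∈ Finset.range n, renewalMass q j
      ≤ ∑ N ∈ Finset.range (n + M + 1), renewalMass q N := calc
    c * ∑ j ∈ Finset.range n, renewalMass q j
        = ∑ m ∈ Finset.range M, ∑ N ∈ Finset.Ico m (m + n), q (m + 1) * renewalMass q (N - m) := by
          simp only [c, Finset.sum_mul, Finset.mul_sum, Finset.sum_Ico_eq_sum_range,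
            Nat.add_sub_cancel_left]
          exact Finset.sum_comm
    _ = ∑ N ∈ Finset.range (n + M), ∑ m ∈ (Finset.range M).filter (fun m => m ≤ N ∧ N < m + n),
          q (m + 1) * renewalMass q (N - m) := by
          refine Finset.sum_comm' fun m N => ?_
          simp only [Finset.mem_range, Finset.mem_Ico, Finset.mem_filter]
          omega
    _ ≤ ∑ N ∈ Finset.range (n + M), renewalMass q (N + 1) :=
          Finset.sum_le_sum fun N _ => sum_mul_renewalMass_le hq fun m hm => by
            simp only [Finset.mem_range, Finset.mem_filter] at hm ⊢
            omega
    _ ≤ ∑ N ∈ Finset.range (n + M + 1), renewalMass q N := by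
          rw [Finset.sum_range_succ' _ (n + M)]
          exact le_add_of_nonneg_right (renewalMass_nonneg_s2 hq 0)
  induction k with
  | zero => simp [renewalMass]
  | succ k ih =>
    rw [pow_succ', show (k + 1) * (M + 1) + 1 = k * (M + 1) + 1 + M + 1 by ring]
    exact (mul_le_mul_of_nonneg_left ih (Finset.sum_nonneg fun m _ => hq _)).trans (hstep _)

lemma exists_one_lt_renewalMass (hq : ∀ n, 0 ≤ q n) {M : ℕ}
    (hM : 1 < ∑ m ∈ Finset.range M, q (m + 1)) : ∃ N, 1 < renewalMass q N := by
  set c := ∑ m ∈ Finset.range M, q (m + 1)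
  obtain ⟨k, hk1, hk⟩ : ∃ k : ℕ, 1 ≤ k ∧ (k : ℝ) ^ 1 / c ^ k < 1 / (M + 2) :=
    ((tendsto_pow_const_div_const_pow_of_one_lt 1 hM).eventually
      (gt_mem_nhds (by positivity)) |>.and (eventually_ge_atTop 1)).exists.imp
      fun k hk => ⟨hk.2, hk.1⟩
  by_contra! hle
  have hsum := (sum_pow_le_sum_renewalMass hq M k).trans
    (Finset.sum_le_card_nsmul _ _ 1 fun N _ => hle N)
  rw [pow_one, div_lt_div_iff₀ (by positivity) (by positivity)] at hk
  have hk1' : (1 : ℝ) ≤ k := by exact_mod_cast hk1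
  simp only [Finset.card_range, nsmul_eq_mul, mul_one] at hsum
  push_cast at hsum
  nlinarith

end renewalMass

lemma pow_mul_le_of_mul_le {u : ℕ → ℝ} (hu : ∀ m n, u m * u n ≤ u (m + n)) {N : ℕ}
    (huN : 0 ≤ u N) (k r : ℕ) : u N ^ k * u r ≤ u (k * N + r) := by
  induction k with
  | zero => simp
  | succ k ih =>
    rw [pow_succ', mul_assoc, show (k + 1) * N + r = N + (k * N + r) by ring]
    exact (mul_le_mul_of_nonneg_left ih huN).trans (hu _ _)

/-- Split `p = k * N + r` with `r` in the fixed window `[n₀, n₀ + N)`, on which `u` is positive. -/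
lemma eventually_lt_log_div_of_mul_le {u : ℕ → ℝ} (hu : ∀ m n, u m * u n ≤ u (m + n))
    {n₀ : ℕ} (hpos : ∀ n, n₀ ≤ n → 0 < u n) {N : ℕ} (hN : N ≠ 0) (huN : 0 < u N) {a : ℝ}
    (ha : a < Real.log (u N) / N) : ∀ᶠ p in atTop, a < Real.log (u p) / p := by
  set ℓ := Real.log (u N) / N with hℓ
  obtain ⟨C, hC⟩ := ((Set.finite_Iio (n₀ + N)).image fun r : ℕ => r * ℓ - Real.log (u r)).bddAbove
  have hlin (p : ℕ) (hp : n₀ ≤ p) : p * ℓ - C ≤ Real.log (u p) := by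
    obtain ⟨k, r, hr₀, hr, hp⟩ : ∃ k r, n₀ ≤ r ∧ r < n₀ + N ∧ p = k * N + r := by
      refine ⟨(p - n₀) / N, n₀ + (p - n₀) % N, by omega, ?_, ?_⟩
      · have := Nat.mod_lt (p - n₀) (Nat.pos_of_ne_zero hN); omega
      · have := Nat.div_add_mod (p - n₀) N; rw [mul_comm]; omega
    have hur : 0 < u r := hpos r hr₀
    have hlog : k * Real.log (u N) + Real.log (u r) ≤ Real.log (u p) := by
      rw [← Real.log_pow, ← Real.log_mul (by positivity) hur.ne', hp]
      exact Real.log_le_log (by positivity) (pow_mul_le_of_mul_le hu huN.le k r)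
    have hkN : (k : ℝ) * Real.log (u N) = (p - r) * ℓ := by
      rw [hp, hℓ]; push_cast; field_simp; ring
    have := hC ⟨r, hr, rfl⟩
    linarith
  have hlim : Tendsto (fun p : ℕ => ℓ - C / p) atTop (𝓝 ℓ) := by
    simpa using (tendsto_const_div_atTop_nhds_zero_nat C).const_sub ℓ
  filter_upwards [hlim.eventually (lt_mem_nhds ha), eventually_ge_atTop (max n₀ 1)] with p hap hp
  have hp0 : (0 : ℝ) < p := by exact_mod_cast (le_max_right _ _).trans hp
  refine hap.trans_le ?_
  rw [le_div_iff₀ hp0, sub_mul, div_mul_cancel₀ _ hp0.ne']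
  linarith [hlin p ((le_max_left _ _).trans hp)]

noncomputable def tiltedKernel (K : ℕ → ℝ) (h a : ℝ) (m : ℕ) : ℝ :=
  Real.exp (h - a * m) * K m

noncomputable def tiltedMass (K : ℕ → ℝ) (h b : ℝ) : ℝ :=
  ∑' n : ℕ, Real.exp (h - b * (n + 1)) * K (n + 1)

section Tilted

variable {K : ℕ → ℝ} {h : ℝ}

lemma tiltedKernel_nonneg (hKnn : ∀ n, 0 ≤ K n) (a : ℝ) (m : ℕ) : 0 ≤ tiltedKernel K h a m :=
  mul_nonneg (Real.exp_pos _).le (hKnn m)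

lemma tiltedKernel_succ (K : ℕ → ℝ) (h a : ℝ) (n : ℕ) :
    tiltedKernel K h a (n + 1) = Real.exp (h - a * (n + 1)) * K (n + 1) := by
  rw [tiltedKernel, Nat.cast_add_one]

lemma tiltedMass_eq_tsum (K : ℕ → ℝ) (h b : ℝ) :
    tiltedMass K h b = ∑' n, tiltedKernel K h b (n + 1) := by
  simp only [tiltedKernel_succ, tiltedMass]

lemma summable_tiltedKernel (hKnn : ∀ n, 0 ≤ K n) (hs : Summable fun n => K (n + 1)) {b : ℝ}
    (hb : 0 ≤ b) : Summable fun n => tiltedKernel K h b (n + 1) :=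
  (hs.mul_left (Real.exp h)).of_nonneg_of_le (fun n => tiltedKernel_nonneg hKnn b _) fun n => by
    rw [tiltedKernel_succ]
    exact mul_le_mul_of_nonneg_right (Real.exp_le_exp.2 (by nlinarith)) (hKnn _)

lemma tiltedMass_zero (K : ℕ → ℝ) (h : ℝ) : tiltedMass K h 0 = Real.exp h * ∑' n, K (n + 1) := by
  simp [tiltedMass, tsum_mul_left]

lemma one_le_tiltedMass_zero_iff (hT : 0 < ∑' n, K (n + 1)) :
    1 ≤ tiltedMass K h 0 ↔ hc0 K ≤ h := by
  rw [tiltedMass_zero, ← Real.log_nonneg_iff (by positivity), Real.log_mul (by positivity) hT.ne',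
    Real.log_exp, hc0, neg_le_iff_add_nonneg', add_comm]

lemma tiltedMass_le (hKnn : ∀ n, 0 ≤ K n) (hs : Summable fun n => K (n + 1)) {b : ℝ}
    (hb : 0 ≤ b) : tiltedMass K h b ≤ Real.exp (h - b) * ∑' n, K (n + 1) := by
  rw [tiltedMass_eq_tsum, ← tsum_mul_left]
  refine (summable_tiltedKernel hKnn hs hb).tsum_le_tsum (fun n => ?_) (hs.mul_left _)
  rw [tiltedKernel_succ]
  exact mul_le_mul_of_nonneg_right (Real.exp_le_exp.2 (by nlinarith)) (hKnn _)

lemma strictAntiOn_tiltedMass (hKnn : ∀ n, 0 ≤ K n) (hs : Summable fun n => K (n + 1))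
    {n₀ : ℕ} (hn₀ : 0 < K (n₀ + 1)) : StrictAntiOn (tiltedMass K h) (Set.Ici 0) := by
  intro y hy z hz hyz
  simp only [tiltedMass_eq_tsum]
  refine Summable.tsum_lt_tsum (i := n₀) (fun n => ?_) ?_ (summable_tiltedKernel hKnn hs hz)
    (summable_tiltedKernel hKnn hs hy)
  · simp only [tiltedKernel_succ]
    exact mul_le_mul_of_nonneg_right (Real.exp_le_exp.2 (by nlinarith)) (hKnn _)
  · simp only [tiltedKernel_succ]
    exact mul_lt_mul_of_pos_right (Real.exp_lt_exp.2 (by nlinarith)) hn₀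

lemma continuousOn_tiltedMass (hKnn : ∀ n, 0 ≤ K n) (hs : Summable fun n => K (n + 1)) :
    ContinuousOn (tiltedMass K h) (Set.Ici 0) := by
  refine continuousOn_tsum (fun n => by fun_prop) (hs.mul_left (Real.exp h)) fun n y hy => ?_
  rw [Real.norm_of_nonneg (mul_nonneg (Real.exp_pos _).le (hKnn _))]
  exact mul_le_mul_of_nonneg_right (Real.exp_le_exp.2 (by nlinarith [Set.mem_Ici.1 hy])) (hKnn _)

lemma existsUnique_tiltedMass_eq_one (hKnn : ∀ n, 0 ≤ K n) (hs : Summable fun n => K (n + 1))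
    {n₀ : ℕ} (hn₀ : 0 < K (n₀ + 1)) (h1 : 1 ≤ tiltedMass K h 0) :
    ∃! b, 0 ≤ b ∧ tiltedMass K h b = 1 := by
  set T := ∑' n, K (n + 1)
  have hT : 0 < T := hs.tsum_pos (fun n => hKnn _) n₀ hn₀
  set B := |h + Real.log T| + 1
  have hB : 0 ≤ B := by positivity
  have hlt : tiltedMass K h B < 1 := calc
    tiltedMass K h B ≤ Real.exp (h - B) * T := tiltedMass_le hKnn hs hB
    _ = Real.exp (h + Real.log T - B) := by
      rw [show h + Real.log T - B = h - B + Real.log T by ring, Real.exp_add, Real.exp_log hT]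
    _ < 1 := Real.exp_lt_one_iff.2 (by linarith [le_abs_self (h + Real.log T)])
  obtain ⟨b, hb, hb1⟩ := intermediate_value_Icc' hB
    ((continuousOn_tiltedMass hKnn hs).mono Set.Icc_subset_Ici_self) ⟨hlt.le, h1⟩
  exact ⟨b, ⟨hb.1, hb1⟩, fun y ⟨hy, hy1⟩ =>
    (strictAntiOn_tiltedMass hKnn hs hn₀).injOn hy hb.1 (hy1.trans hb1.symm)⟩

end Tilted

section Homogeneous

variable {K : ℕ → ℝ} {h : ℝ}

lemma ZcHom_mul_exp_eq_renewalMass (K : ℕ → ℝ) (h a : ℝ) (N : ℕ) :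
    ZcHom K h N * Real.exp (-(a * N)) = renewalMass (tiltedKernel K h a) N := by
  have hexp (m : ℕ) : Real.exp (-(a * m)) = Real.exp (-a) ^ m := by
    rw [← Real.exp_nat_mul]; ring_nf
  rw [hexp, ZcHom_eq_renewalMass, ← renewalMass_mul_pow]
  congr 1
  funext m
  rw [← hexp, tiltedKernel, mul_comm (Real.exp h), mul_assoc, ← Real.exp_add, mul_comm,
    sub_eq_add_neg]

lemma ZcHom_nonneg (hKnn : ∀ n, 0 ≤ K n) (N : ℕ) : 0 ≤ ZcHom K h N := by
  rw [ZcHom_eq_renewalMass]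
  exact renewalMass_nonneg_s2 (fun n => mul_nonneg (Real.exp_pos h).le (hKnn n)) N

lemma ZcHom_pos (hKnn : ∀ n, 0 ≤ K n) {N : ℕ} (hN : 0 < K N) : 0 < ZcHom K h N := by
  rcases N with _ | n
  · rw [ZcHom_zero]; exact one_pos
  · rw [ZcHom_eq_renewalMass]
    exact (mul_pos (Real.exp_pos h) hN).trans_le
      (le_renewalMass (fun n => mul_nonneg (Real.exp_pos h).le (hKnn n)) n)

lemma ZcHom_mul_le (hKnn : ∀ n, 0 ≤ K n) (m n : ℕ) :
    ZcHom K h m * ZcHom K h n ≤ ZcHom K h (m + n) := by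
  simp only [ZcHom_eq_renewalMass]
  exact renewalMass_mul_le (fun n => mul_nonneg (Real.exp_pos h).le (hKnn n)) m n

lemma log_ZcHom_le (hKnn : ∀ n, 0 ≤ K n) (hs : Summable fun n => K (n + 1)) {b : ℝ}
    (hb : 0 ≤ b) (hle : tiltedMass K h b ≤ 1) (N : ℕ) : Real.log (ZcHom K h N) ≤ b * N := by
  have hmass : ZcHom K h N * Real.exp (-(b * N)) ≤ 1 := by
    rw [ZcHom_mul_exp_eq_renewalMass]
    exact renewalMass_le_one (tiltedKernel_nonneg hKnn b) (summable_tiltedKernel hKnn hs hb)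
      (tiltedMass_eq_tsum K h b ▸ hle) N
  rcases (ZcHom_nonneg hKnn N (h := h)).eq_or_lt with hZ | hZ
  · rw [← hZ, Real.log_zero]; positivity
  · rw [Real.log_le_iff_le_exp hZ]
    rwa [Real.exp_neg, mul_inv_le_iff₀ (Real.exp_pos _), one_mul] at hmass

lemma eventually_lt_log_ZcHom_div (hKnn : ∀ n, 0 ≤ K n) {n₀ : ℕ} (hpos : ∀ n, n₀ ≤ n → 0 < K n)
    {a : ℝ} {M : ℕ} (hM : 1 < ∑ n ∈ Finset.range M, tiltedKernel K h a (n + 1)) :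
    ∀ᶠ N in atTop, a < Real.log (ZcHom K h N) / N := by
  obtain ⟨N, hN⟩ := exists_one_lt_renewalMass (tiltedKernel_nonneg hKnn a) hM
  rw [← ZcHom_mul_exp_eq_renewalMass] at hN
  have hZ : 0 < ZcHom K h N := pos_of_mul_pos_left (one_pos.trans hN) (Real.exp_pos _).le
  have hN0 : N ≠ 0 := by rintro rfl; simp [ZcHom_zero] at hN
  have hlog : a * N < Real.log (ZcHom K h N) := by
    have := Real.log_pos hN
    rwa [Real.log_mul hZ.ne' (Real.exp_pos _).ne', Real.log_exp, ← sub_eq_add_neg, sub_pos] at this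
  refine eventually_lt_log_div_of_mul_le (ZcHom_mul_le hKnn)
    (fun n hn => ZcHom_pos hKnn (hpos n hn)) hN0 hZ ?_
  rwa [lt_div_iff₀ (by positivity)]

lemma tendsto_log_ZcHom_div (hKnn : ∀ n, 0 ≤ K n) (hs : Summable fun n => K (n + 1)) {n₀ : ℕ}
    (hpos : ∀ n, n₀ ≤ n → 0 < K n) {b : ℝ} (hb : 0 ≤ b) (hle : tiltedMass K h b ≤ 1)
    (hlow : ∀ a < b, ∃ M, 1 < ∑ n ∈ Finset.range M, tiltedKernel K h a (n + 1)) :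
    Tendsto (fun N : ℕ => Real.log (ZcHom K h N) / N) atTop (𝓝 b) := by
  refine tendsto_order.2 ⟨fun a ha => ?_, fun a ha => ?_⟩
  · obtain ⟨M, hM⟩ := hlow a ha
    exact eventually_lt_log_ZcHom_div hKnn hpos hM
  · filter_upwards [eventually_gt_atTop 0] with N hN
    rw [div_lt_iff₀ (by positivity)]
    exact (log_ZcHom_le hKnn hs hb hle N).trans_lt
      (mul_lt_mul_of_pos_right ha (by exact_mod_cast hN))

lemma exists_one_lt_sum_tiltedKernel_of_tiltedMass_eq_one (hKnn : ∀ n, 0 ≤ K n)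
    (hs : Summable fun n => K (n + 1)) {a b : ℝ} (hb : 0 ≤ b) (hb1 : tiltedMass K h b = 1)
    (hab : a < b) : ∃ M, 1 < ∑ n ∈ Finset.range M, tiltedKernel K h a (n + 1) := by
  have hpartial := (summable_tiltedKernel hKnn hs hb (h := h)).hasSum.tendsto_sum_nat
  rw [← tiltedMass_eq_tsum, hb1] at hpartial
  obtain ⟨M, hM⟩ := (hpartial.eventually (lt_mem_nhds
    (Real.exp_lt_one_iff.2 (sub_neg.2 hab)))).exists
  refine ⟨M, ?_⟩
  calc 1 = Real.exp (b - a) * Real.exp (a - b) := by rw [← Real.exp_add]; simp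
    _ < Real.exp (b - a) * ∑ n ∈ Finset.range M, tiltedKernel K h b (n + 1) :=
        mul_lt_mul_of_pos_left hM (Real.exp_pos _)
    _ ≤ ∑ n ∈ Finset.range M, tiltedKernel K h a (n + 1) := by
        rw [Finset.mul_sum]
        refine Finset.sum_le_sum fun n _ => ?_
        rw [tiltedKernel_succ, tiltedKernel_succ, ← mul_assoc, ← Real.exp_add]
        exact mul_le_mul_of_nonneg_right (Real.exp_le_exp.2 (by nlinarith)) (hKnn _)

lemma exists_one_lt_sum_tiltedKernel_of_neg (hKnn : ∀ n, 0 ≤ K n)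
    (hsub : ∀ ε > 0, ∀ᶠ n : ℕ in atTop, Real.exp (-(ε * n)) < K n) {a : ℝ} (ha : a < 0) :
    ∃ M, 1 < ∑ n ∈ Finset.range M, tiltedKernel K h a (n + 1) := by
  have hε : 0 < -a / 2 := by linarith
  obtain ⟨n, hKn, hn⟩ := ((tendsto_add_atTop_nat 1).eventually (hsub _ hε)).and
    (tendsto_natCast_atTop_atTop.eventually_gt_atTop (|h| / (-a / 2))) |>.exists
  rw [div_lt_iff₀ hε] at hn
  refine ⟨n + 1, ?_⟩
  calc 1 < Real.exp (h + -a / 2 * (n + 1)) :=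
        Real.one_lt_exp_iff.2 (by nlinarith [neg_abs_le h])
    _ = Real.exp (h - a * (n + 1)) * Real.exp (-(-a / 2 * ((n + 1 : ℕ) : ℝ))) := by
        rw [← Real.exp_add]; push_cast; ring_nf
    _ ≤ tiltedKernel K h a (n + 1) := by
        rw [tiltedKernel_succ]
        exact mul_le_mul_of_nonneg_left hKn.le (Real.exp_pos _).le
    _ ≤ ∑ n ∈ Finset.range (n + 1), tiltedKernel K h a (n + 1) :=
        Finset.single_le_sum (f := fun n => tiltedKernel K h a (n + 1))
          (fun i _ => tiltedKernel_nonneg hKnn a _) (Finset.self_mem_range_succ n)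

end Homogeneous

lemma eventually_exp_neg_mul_lt {K L : ℕ → ℝ} {α cK : ℝ} (hcK : 0 < cK)
    (hL : Tendsto L atTop (𝓝 cK)) (hKform : ∀ n : ℕ, 1 ≤ n → K n = L n / (n : ℝ) ^ (1 + α))
    {ε : ℝ} (hε : 0 < ε) : ∀ᶠ n : ℕ in atTop, Real.exp (-(ε * n)) < K n := by
  have hlim : Tendsto (fun n : ℕ => Real.log (L n) / n - (1 + α) * (Real.log n / n)) atTop
      (𝓝 0) := by
    have hLlog := ((Real.continuousAt_log hcK.ne').tendsto.comp hL).div_atTop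
      tendsto_natCast_atTop_atTop
    have hlog := Real.isLittleO_log_id_atTop.tendsto_div_nhds_zero.comp tendsto_natCast_atTop_atTop
    simpa using hLlog.sub (hlog.const_mul (1 + α))
  filter_upwards [hlim.eventually (lt_mem_nhds (neg_neg_of_pos hε)),
    hL.eventually (lt_mem_nhds hcK), eventually_ge_atTop 1] with n hlogn hLn hn
  have hn0 : (0 : ℝ) < n := by exact_mod_cast hn
  rw [hKform n hn, Real.rpow_def_of_pos hn0, ← Real.exp_log hLn, ← Real.exp_sub, Real.exp_lt_exp]
  have hmul := mul_lt_mul_of_pos_right hlogn hn0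
  rw [sub_mul, div_mul_cancel₀ _ hn0.ne', mul_assoc, div_mul_cancel₀ _ hn0.ne'] at hmul
  linarith

theorem homogeneous_free_energy_eq_b_general
    (α : ℝ)
    (K L : ℕ → ℝ) (cK : ℝ) (hcK : 0 < cK)
    (hKnn : ∀ n, 0 ≤ K n)
    (hKsummable : Summable fun n : ℕ => K (n + 1))
    (hKform : ∀ n : ℕ, 1 ≤ n → K n = L n / (n : ℝ) ^ (1 + α))
    (hL : Tendsto L atTop (nhds cK)) :
    (∀ h : ℝ, hc0 K ≤ h →
      ∃! b : ℝ, 0 ≤ b ∧ ∑' n : ℕ, Real.exp (h - b * (n + 1)) * K (n + 1) = 1) ∧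
    (∀ h b : ℝ,
      ((hc0 K ≤ h ∧ 0 ≤ b ∧ ∑' n : ℕ, Real.exp (h - b * (n + 1)) * K (n + 1) = 1) ∨
        (h < hc0 K ∧ b = 0)) →
      Tendsto (fun N : ℕ => Real.log (ZcHom K h N) / N) atTop (nhds b)) := by
  have hsub := fun ε (hε : 0 < ε) => eventually_exp_neg_mul_lt hcK hL hKform hε
  obtain ⟨n₀, hpos⟩ : ∃ n₀, ∀ n, n₀ ≤ n → 0 < K n :=
    eventually_atTop.1 ((hsub 1 one_pos).mono fun n hn => (Real.exp_pos _).trans hn)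
  have hn₀ : 0 < K (n₀ + 1) := hpos _ n₀.le_succ
  have hT : 0 < ∑' n, K (n + 1) := hKsummable.tsum_pos (fun n => hKnn _) n₀ hn₀
  refine ⟨fun h hh => existsUnique_tiltedMass_eq_one hKnn hKsummable hn₀
    ((one_le_tiltedMass_zero_iff hT).2 hh), ?_⟩
  rintro h b (⟨-, hb, hb1⟩ | ⟨hh, rfl⟩)
  · exact tendsto_log_ZcHom_div hKnn hKsummable hpos hb hb1.le fun a ha =>
      exists_one_lt_sum_tiltedKernel_of_tiltedMass_eq_one hKnn hKsummable hb hb1 ha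
  · have hle : tiltedMass K h 0 ≤ 1 :=
      (not_le.1 fun h1 => hh.not_ge ((one_le_tiltedMass_zero_iff hT).1 h1)).le
    exact tendsto_log_ZcHom_div hKnn hKsummable hpos le_rfl hle fun a ha =>
      exists_one_lt_sum_tiltedKernel_of_neg hKnn hsub ha

theorem homogeneous_free_energy_eq_b
    (α : ℝ) (hα : 0 < α)
    (K L : ℕ → ℝ) (cK : ℝ) (hcK : 0 < cK)
    (hK0 : K 0 = 0) (hKnn : ∀ n, 0 ≤ K n)
    (hKsummable : Summable fun n : ℕ => K (n + 1))
    (hKsum : ∑' n : ℕ, K (n + 1) ≤ 1)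
    (hKform : ∀ n : ℕ, 1 ≤ n → K n = L n / (n : ℝ) ^ (1 + α))
    (hL : Tendsto L atTop (nhds cK)) :
    (∀ h : ℝ, hc0 K ≤ h →
      ∃! b : ℝ, 0 ≤ b ∧ ∑' n : ℕ, Real.exp (h - b * (n + 1)) * K (n + 1) = 1) ∧
    (∀ h b : ℝ,
      ((hc0 K ≤ h ∧ 0 ≤ b ∧ ∑' n : ℕ, Real.exp (h - b * (n + 1)) * K (n + 1) = 1) ∨
        (h < hc0 K ∧ b = 0)) →
      Tendsto (fun N : ℕ => Real.log (ZcHom K h N) / N) atTop (nhds b)) :=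
  homogeneous_free_energy_eq_b_general α K L cK hcK hKnn hKsummable hKform hL
end
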